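/- arXiv:0804.3943 — 3 statements merged into one kernel-verified Lean document; each statement's English description precedes it below -/
import Mathlib

section
/- Assume H is strictly convex (d_k > 0 for some finite k ≥ 2). Then the set {x ∈ [0,1] : H(x) − x = 1 − 2μ¹} has at most two elements; it contains μ¹; and it contains an element strictly less than μ¹ if and only if H'(μ¹) > 1, where H'(x) = ∑_{k≥1} k d_k x^{k−1}. -/
open MeasureTheory ProbabilityTheory Filter Topology

/-- The generating function `H(x) = ∑_{k≥1} d_k x^k` (we use `d : ℕ → ℝ` with `d 0 = 0`). -/
noncomputable def genFun (d : ℕ → ℝ) (x : ℝ) : ℝ := ∑' k, d k * x ^ k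

/-- The derivative `H'(x) = ∑_{k≥1} k d_k x^(k-1)`. -/
noncomputable def genFunDeriv (d : ℕ → ℝ) (x : ℝ) : ℝ :=
  ∑' k : ℕ, ((k : ℝ) + 1) * d (k + 1) * x ^ k

/-- The product `∏_{i=1}^N X_i`, where on `{N = ∞}` it is the limit (infimum) of the
nonincreasing partial products. -/
noncomputable def rdeProd {Ω : Type*} (X : ℕ → Ω → ℝ) (N : Ω → ℕ∞) (ω : Ω) : ℝ :=
  if N ω = ⊤ then ⨅ n, ∏ i ∈ Finset.range n, X i ω
  else ∏ i ∈ Finset.range (N ω).toNat, X i ω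

/-- `ν` is invariant for the RDE `X = 1 - ∏_{i=1}^N X_i`: whenever `(X_i)` are i.i.d. with
law `ν` and `N` is an independent `ℕ ∪ {∞}`-valued random variable with `P(N = k) = d_k`,
the random variable `Y = 1 - ∏_{i=1}^N X_i` again has law `ν`. -/
def IsRDEInvariant (d : ℕ → ℝ) (ν : Measure ℝ) : Prop :=
  ∀ (Ω : Type) (_ : MeasureSpace Ω) (X : ℕ → Ω → ℝ) (N : Ω → ℕ∞),
    IsProbabilityMeasure (ℙ : Measure Ω) →
    (∀ i, Measurable (X i)) → Measurable N →
    (∀ i, Measure.map (X i) ℙ = ν) →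
    iIndepFun X ℙ →
    IndepFun (fun ω i => X i ω) N ℙ →
    (∀ k : ℕ, ℙ {ω | N ω = (k : ℕ∞)} = ENNReal.ofReal (d k)) →
    Measure.map (fun ω => 1 - rdeProd X N ω) ℙ = ν

/-- The two-point measure on `{0,1} ⊆ ℝ` with mass `μ` at `1` and `1 - μ` at `0`. -/
noncomputable def bern (μ : ℝ) : Measure ℝ :=
  ENNReal.ofReal μ • Measure.dirac 1 + ENNReal.ofReal (1 - μ) • Measure.dirac 0

/-! The function `f x = H x - x` is strictly convex on `[0,1]` and `f μ¹ = 1 - 2μ¹`, so the set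
is a level set of a strictly convex function through `μ¹`, which has at most two points.
A second point `x < μ¹` makes the chord slope `0` of `f` on `[x, μ¹]` smaller than
`f' μ¹ = H' μ¹ - 1`. Conversely, if `f' μ¹ > 0` then `f` drops below `f μ¹` just left of `μ¹`,
while `f 0 = 0 > 1 - 2μ¹` since strict convexity gives `H μ¹ < μ¹ H 1 ≤ μ¹`; the intermediate
value theorem then produces the second point. -/

open Set

theorem Set.encard_le_two_of_forall_not_lt_lt {α : Type*} [LinearOrder α] {S : Set α}
    (h : ∀ p ∈ S, ∀ q ∈ S, ∀ r ∈ S, p < q → ¬q < r) : S.encard ≤ 2 := by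
  rcases le_or_gt S.encard 1 with hS | hS
  · exact hS.trans one_le_two
  obtain ⟨a, b, ha, hb, hab⟩ := one_lt_encard_iff.1 hS
  wlog hlt : a < b generalizing a b
  · exact this b a hb ha hab.symm (hab.lt_or_gt.resolve_left hlt)
  calc S.encard ≤ ({a, b} : Set α).encard := encard_le_encard fun c hc => ?_
    _ = 2 := encard_pair hab
  rcases lt_trichotomy c a with hca | rfl | hac
  · exact absurd hlt (h c hc a ha b hb hca)
  · exact mem_insert _ _
  rcases lt_trichotomy c b with hcb | rfl | hbc
  · exact absurd hcb (h a ha c hc b hb hac)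
  · exact mem_insert_of_mem _ rfl
  · exact absurd hbc (h a ha b hb c hc hlt)

theorem StrictConvexOn.encard_setOf_eq_le_two {𝕜 β : Type*} [Field 𝕜] [LinearOrder 𝕜]
    [IsStrictOrderedRing 𝕜] [AddCommMonoid β] [LinearOrder β] [IsOrderedAddMonoid β]
    [Module 𝕜 β] [PosSMulStrictMono 𝕜 β] {s : Set 𝕜} {f : 𝕜 → β}
    (hf : StrictConvexOn 𝕜 s f) (c : β) : {x ∈ s | f x = c}.encard ≤ 2 := by
  refine encard_le_two_of_forall_not_lt_lt fun p ⟨hp, hfp⟩ q ⟨_, hfq⟩ r ⟨hr, hfr⟩ hpq hqr => ?_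
  have := hf.lt_on_openSegment hp hr (hpq.trans hqr).ne (Ioo_subset_openSegment ⟨hpq, hqr⟩)
  simp [hfp, hfq, hfr] at this

theorem exists_mem_Ico_eq_of_hasDerivAt_pos {f : ℝ → ℝ} {a b f' : ℝ} (hab : a < b)
    (hcont : ContinuousOn f (Icc a b)) (hf : HasDerivAt f f' b) (hf' : 0 < f')
    (hfa : f b < f a) : ∃ x ∈ Ico a b, f x = f b := by
  have hslope : ∀ᶠ m in 𝓝[<] b, 0 < slope f b m :=
    ((hasDerivAt_iff_tendsto_slope.1 hf).mono_left (nhdsLT_le_nhdsNE b)).eventually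
      (lt_mem_nhds hf')
  obtain ⟨m, hm, hmab⟩ := (hslope.and (Ioo_mem_nhdsLT hab)).exists
  rw [slope_comm, slope_pos_iff_of_le hmab.2.le] at hm
  obtain ⟨x, hx, hfx⟩ := intermediate_value_Icc' hmab.1.le
    (hcont.mono (Icc_subset_Icc_right hmab.2.le)) ⟨hm.le, hfa.le⟩
  exact ⟨x, ⟨hx.1, hx.2.trans_lt hmab.2⟩, hfx⟩

theorem summable_coe_mul_pow_sub_one {r : ℝ} (hr : |r| < 1) :
    Summable fun k : ℕ => (k : ℝ) * r ^ (k - 1) := by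
  rw [← summable_nat_add_iff 1]
  simpa [add_mul] using
    (summable_pow_mul_geometric_of_norm_lt_one 1 hr).add (summable_geometric_of_abs_lt_one hr)

section genFun

variable {d : ℕ → ℝ}

theorem genFun_zero : genFun d 0 = d 0 := by
  rw [genFun, tsum_eq_single 0 fun k hk => by simp [hk]]
  simp

theorem genFun_one : genFun d 1 = ∑' k, d k := by
  simp [genFun]

theorem norm_coeff_mul_pow_le (k : ℕ) {x : ℝ} (hx : |x| ≤ 1) : ‖d k * x ^ k‖ ≤ |d k| := by
  rw [norm_mul, norm_pow, Real.norm_eq_abs, Real.norm_eq_abs]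
  exact mul_le_of_le_one_right (abs_nonneg _) (pow_le_one₀ (abs_nonneg x) hx)

theorem summable_genFun (hd : Summable fun k => |d k|) {x : ℝ} (hx : |x| ≤ 1) :
    Summable fun k => d k * x ^ k :=
  .of_norm_bounded hd fun k => norm_coeff_mul_pow_le k hx

theorem continuousOn_genFun (hd : Summable fun k => |d k|) :
    ContinuousOn (genFun d) (Icc (-1) 1) :=
  continuousOn_tsum (fun k => (continuous_const.mul (continuous_pow k)).continuousOn) hd
    fun k _ hx => norm_coeff_mul_pow_le k (abs_le.2 hx)

theorem hasDerivAt_genFun {C : ℝ} (hC : ∀ k, |d k| ≤ C) {x : ℝ} (hx : |x| < 1) :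
    HasDerivAt (genFun d) (genFunDeriv d x) x := by
  obtain ⟨r, hxr, hr1⟩ := exists_between hx
  have hr0 : 0 < r := (abs_nonneg x).trans_lt hxr
  have hbound : ∀ k, ∀ y ∈ Ioo (-r) r, ‖d k * (k * y ^ (k - 1))‖ ≤ C * (k * r ^ (k - 1)) := by
    intro k y hy
    rw [norm_mul, norm_mul, norm_pow, Real.norm_eq_abs, Real.norm_eq_abs, Real.norm_eq_abs,
      Nat.abs_cast]
    gcongr
    · exact (abs_nonneg _).trans (hC 0)
    · exact hC k
    · exact (abs_lt.2 hy).le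
  have hsum0 : Summable fun k => d k * (0 : ℝ) ^ k := by
    rw [← summable_nat_add_iff 1]
    simp
  have hx' : x ∈ Ioo (-r) r := abs_lt.1 hxr
  have hu : Summable fun k : ℕ => C * (k * r ^ (k - 1)) :=
    (summable_coe_mul_pow_sub_one (by rwa [abs_of_pos hr0])).mul_left C
  have hderiv := hasDerivAt_tsum_of_isPreconnected hu
    isOpen_Ioo isPreconnected_Ioo (fun k y _ => (hasDerivAt_pow k y).const_mul (d k)) hbound
    ⟨neg_lt_zero.2 hr0, hr0⟩ hsum0 hx'
  have hval : ∑' k, d k * (k * x ^ (k - 1)) = genFunDeriv d x := by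
    rw [(Summable.of_norm_bounded hu fun k => hbound k x hx').tsum_eq_zero_add, genFunDeriv]
    simp only [Nat.cast_zero, zero_mul, mul_zero, zero_add, Nat.add_sub_cancel, Nat.cast_succ]
    congr 1 with k
    ring
  exact hval ▸ hderiv

theorem strictConvexOn_genFun (hdnn : ∀ k, 0 ≤ d k) (hdsum : Summable d)
    (hconv : ∃ k, 2 ≤ k ∧ 0 < d k) : StrictConvexOn ℝ (Icc 0 1) (genFun d) := by
  obtain ⟨k₀, hk₀, hdk₀⟩ := hconv
  have hsum : ∀ x ∈ Icc (0 : ℝ) 1, Summable fun k => d k * x ^ k := fun x hx =>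
    summable_genFun hdsum.abs (abs_le.2 ⟨by linarith [hx.1], hx.2⟩)
  refine ⟨convex_Icc 0 1, fun x hx y hy hxy a b ha hb hab => ?_⟩
  have hterm (k : ℕ) : d k * (a • x + b • y) ^ k ≤ a • (d k * x ^ k) + b • (d k * y ^ k) :=
    (mul_le_mul_of_nonneg_left ((convexOn_pow k).2 hx.1 hy.1 ha.le hb.le hab) (hdnn k)).trans_eq
      (by simp only [smul_eq_mul]; ring)
  have hterm₀ : d k₀ * (a • x + b • y) ^ k₀ < a • (d k₀ * x ^ k₀) + b • (d k₀ * y ^ k₀) :=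
    (mul_lt_mul_of_pos_left ((strictConvexOn_pow hk₀).2 hx.1 hy.1 hxy ha hb hab) hdk₀).trans_eq
      (by simp only [smul_eq_mul]; ring)
  calc genFun d (a • x + b • y)
      < ∑' k, (a • (d k * x ^ k) + b • (d k * y ^ k)) :=
        Summable.tsum_lt_tsum hterm hterm₀ (hsum _ (convex_Icc 0 1 hx hy ha.le hb.le hab))
          (((hsum x hx).const_smul a).add ((hsum y hy).const_smul b))
    _ = a • genFun d x + b • genFun d y := by
        rw [((hsum x hx).const_smul a).tsum_add ((hsum y hy).const_smul b), tsum_const_smul'',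
          tsum_const_smul'']
        rfl

theorem genFun_lt_self (hd0 : d 0 = 0) (hdle : ∑' k, d k ≤ 1)
    (hconv : StrictConvexOn ℝ (Icc 0 1) (genFun d)) {x : ℝ} (hx : x ∈ Ioo 0 1) :
    genFun d x < x := by
  have := hconv.2 (left_mem_Icc.2 zero_le_one) (right_mem_Icc.2 zero_le_one) zero_ne_one
    (sub_pos.2 hx.2) hx.1 (sub_add_cancel 1 x)
  simp only [smul_eq_mul, mul_zero, mul_one, zero_add, genFun_zero, genFun_one, hd0] at this
  nlinarith [hx.1]

end genFun

/-- if `H` is strictly convex, the set `{x ∈ [0,1] : H(x) - x = 1 - 2μ¹}` has at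
most two elements, contains `μ¹`, and contains an element strictly less than `μ¹` iff
`H'(μ¹) > 1`. -/
theorem second_moment_roots (d : ℕ → ℝ) (hd0 : d 0 = 0) (hdnn : ∀ k, 0 ≤ d k)
    (hdsum : Summable d) (hdle : ∑' k, d k ≤ 1)
    (hconv : ∃ k : ℕ, 2 ≤ k ∧ 0 < d k)
    (μ1 : ℝ) (hμ1 : μ1 ∈ Set.Ioo (0 : ℝ) 1) (hroot : genFun d μ1 + μ1 = 1) :
    ({x ∈ Set.Icc (0 : ℝ) 1 | genFun d x - x = 1 - 2 * μ1}).encard ≤ 2 ∧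
    μ1 ∈ {x ∈ Set.Icc (0 : ℝ) 1 | genFun d x - x = 1 - 2 * μ1} ∧
    ((∃ x ∈ {x ∈ Set.Icc (0 : ℝ) 1 | genFun d x - x = 1 - 2 * μ1}, x < μ1) ↔
      1 < genFunDeriv d μ1) := by
  set f : ℝ → ℝ := fun x => genFun d x - x
  have hH := strictConvexOn_genFun hdnn hdsum hconv
  have hf : StrictConvexOn ℝ (Icc 0 1) f := hH.sub_concaveOn (concaveOn_id (convex_Icc 0 1))
  have hfμ : f μ1 = 1 - 2 * μ1 := by simp only [f]; linarith
  have hμ : μ1 ∈ Icc (0 : ℝ) 1 := Ioo_subset_Icc_self hμ1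
  have hd_le_one (k : ℕ) : |d k| ≤ 1 :=
    (abs_of_nonneg (hdnn k)).trans_le ((hdsum.le_tsum k fun j _ => hdnn j).trans hdle)
  have hderiv : HasDerivAt f (genFunDeriv d μ1 - 1) μ1 :=
    (hasDerivAt_genFun hd_le_one (abs_lt.2 ⟨by linarith [hμ1.1], hμ1.2⟩)).sub (hasDerivAt_id μ1)
  refine ⟨hf.encard_setOf_eq_le_two _, ⟨hμ, hfμ⟩, ⟨?_, fun hH'μ => ?_⟩⟩
  · rintro ⟨x, ⟨hx, hfx : f x = _⟩, hxμ⟩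
    have := hf.slope_lt_of_hasDerivAt hx hμ hxμ hderiv
    rw [slope_def_field, hfx, hfμ, sub_self, zero_div] at this
    linarith
  · have hf0 : f μ1 < f 0 := by
      simp only [f, genFun_zero, hd0]
      linarith [genFun_lt_self hd0 hdle hH hμ1]
    have hcont : ContinuousOn f (Icc 0 μ1) :=
      ((continuousOn_genFun hdsum.abs).mono (Icc_subset_Icc (by norm_num) hμ.2)).sub
        continuousOn_id
    obtain ⟨x, hx, hfx⟩ := exists_mem_Ico_eq_of_hasDerivAt_pos hμ1.1 hcont hderiv
      (by linarith) hf0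
    exact ⟨x, ⟨⟨hx.1, hx.2.le.trans hμ.2⟩, hfx.trans hfμ⟩, hx.2⟩
end

section
/- For n ≥ 1 let H_n(s) = ∑_{k=1}^{n−1} d_k s^k + (1 − ∑_{k=1}^{n−1} d_k) s^n, and let μ_n¹ be the unique root in (0,1) of H_n(x) + x = 1. Then the sequence (μ_n¹) is nondecreasing, μ_n¹ ≤ μ¹ for every n, and μ_n¹ → μ¹ as n → ∞. -/
open MeasureTheory ProbabilityTheory Filter Topology

/-- The truncated generating function
`H_n(s) = ∑_{k=1}^{n-1} d_k s^k + (1 - ∑_{k=1}^{n-1} d_k) s^n`,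
the generating function of `min(n, N)` (recall `d 0 = 0`). -/
noncomputable def genFunTrunc (d : ℕ → ℝ) (n : ℕ) (s : ℝ) : ℝ :=
  ∑ k ∈ Finset.range n, d k * s ^ k + (1 - ∑ k ∈ Finset.range n, d k) * s ^ n

/-- The derivative of the truncated generating function,
`H_n'(s) = ∑_{k=1}^{n-1} k d_k s^(k-1) + n (1 - ∑_{k=1}^{n-1} d_k) s^(n-1)`. -/
noncomputable def genFunTruncDeriv (d : ℕ → ℝ) (n : ℕ) (s : ℝ) : ℝ :=
  ∑ k ∈ Finset.range n, (k : ℝ) * d k * s ^ (k - 1) +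
    (n : ℝ) * (1 - ∑ k ∈ Finset.range n, d k) * s ^ (n - 1)

section Aux

variable {d : ℕ → ℝ}

lemma aux_summable (hdnn : ∀ k, 0 ≤ d k) (hdsum : Summable d)
    {s : ℝ} (hs0 : 0 ≤ s) (hs1 : s ≤ 1) : Summable (fun k => d k * s ^ k) :=
  Summable.of_nonneg_of_le (fun k => mul_nonneg (hdnn k) (pow_nonneg hs0 k))
    (fun k => mul_le_of_le_one_right (hdnn k) (pow_le_one₀ hs0 hs1)) hdsum

lemma aux_genFun_mono (hdnn : ∀ k, 0 ≤ d k) (hdsum : Summable d)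
    {a b : ℝ} (ha0 : 0 ≤ a) (hab : a ≤ b) (hb1 : b ≤ 1) : genFun d a ≤ genFun d b :=
  Summable.tsum_le_tsum
    (fun k => mul_le_mul_of_nonneg_left (pow_le_pow_left₀ ha0 hab k) (hdnn k))
    (aux_summable hdnn hdsum ha0 (hab.trans hb1)) (aux_summable hdnn hdsum (ha0.trans hab) hb1)

lemma aux_trunc_mono (hdnn : ∀ k, 0 ≤ d k) (hdsum : Summable d) (hdle : ∑' k, d k ≤ 1)
    (n : ℕ) {a b : ℝ} (ha0 : 0 ≤ a) (hab : a ≤ b) (hb1 : b ≤ 1) :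
    genFunTrunc d n a ≤ genFunTrunc d n b := by
  have hS : ∑ k ∈ Finset.range n, d k ≤ 1 :=
    le_trans (Summable.sum_le_tsum _ (fun k _ => hdnn k) hdsum) hdle
  unfold genFunTrunc
  refine add_le_add (Finset.sum_le_sum fun k _ => ?_) ?_
  · exact mul_le_mul_of_nonneg_left (pow_le_pow_left₀ ha0 hab k) (hdnn k)
  · exact mul_le_mul_of_nonneg_left (pow_le_pow_left₀ ha0 hab n) (by linarith)

/-- `H ≤ H_n ≤ H + s^n` on `[0,1]`. -/
lemma aux_trunc_bounds (hdnn : ∀ k, 0 ≤ d k) (hdsum : Summable d) (hdle : ∑' k, d k ≤ 1)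
    (n : ℕ) {s : ℝ} (hs0 : 0 ≤ s) (hs1 : s ≤ 1) :
    genFun d s ≤ genFunTrunc d n s ∧ genFunTrunc d n s ≤ genFun d s + s ^ n := by
  set S := ∑ k ∈ Finset.range n, d k with hSdef
  have hSnn : 0 ≤ S := Finset.sum_nonneg fun k _ => hdnn k
  have hsum := aux_summable hdnn hdsum hs0 hs1
  have hsplit : (∑ k ∈ Finset.range n, d k * s ^ k) + ∑' i, d (i + n) * s ^ (i + n)
      = genFun d s := Summable.sum_add_tsum_nat_add n hsum
  have hdsplit : S + ∑' i, d (i + n) = ∑' k, d k := Summable.sum_add_tsum_nat_add n hdsum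
  have hsum1 : Summable (fun i => d (i + n) * s ^ (i + n)) := (summable_nat_add_iff n).2 hsum
  have hsum2 : Summable (fun i => d (i + n) * s ^ n) :=
    ((summable_nat_add_iff n).2 hdsum).mul_right _
  have hT_nn : 0 ≤ ∑' i, d (i + n) * s ^ (i + n) :=
    tsum_nonneg fun i => mul_nonneg (hdnn _) (pow_nonneg hs0 _)
  have hT_le : (∑' i, d (i + n) * s ^ (i + n)) ≤ (1 - S) * s ^ n := by
    have h1 : (∑' i, d (i + n) * s ^ (i + n)) ≤ ∑' i, d (i + n) * s ^ n := by
      refine Summable.tsum_le_tsum (fun i => ?_) hsum1 hsum2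
      have : s ^ (i + n) ≤ s ^ n := by
        rw [pow_add]
        exact mul_le_of_le_one_left (pow_nonneg hs0 n) (pow_le_one₀ hs0 hs1)
      exact mul_le_mul_of_nonneg_left this (hdnn _)
    have h2 : (∑' i, d (i + n) * s ^ n) = (∑' i, d (i + n)) * s ^ n := tsum_mul_right
    have h3 : (∑' i, d (i + n)) ≤ 1 - S := by linarith
    have h4 : (∑' i, d (i + n)) * s ^ n ≤ (1 - S) * s ^ n :=
      mul_le_mul_of_nonneg_right h3 (pow_nonneg hs0 n)
    linarith
  have hsn : 0 ≤ s ^ n := pow_nonneg hs0 n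
  constructor
  · unfold genFunTrunc
    rw [← hSdef, ← hsplit]
    linarith
  · unfold genFunTrunc
    rw [← hSdef, ← hsplit]
    nlinarith

/-- `H_{n+1} ≤ H_n` on `[0,1]`. -/
lemma aux_trunc_succ_le (hdnn : ∀ k, 0 ≤ d k) (hdsum : Summable d) (hdle : ∑' k, d k ≤ 1)
    (n : ℕ) {s : ℝ} (hs0 : 0 ≤ s) (hs1 : s ≤ 1) :
    genFunTrunc d (n + 1) s ≤ genFunTrunc d n s := by
  have hS : ∑ k ∈ Finset.range (n + 1), d k ≤ 1 :=
    le_trans (Summable.sum_le_tsum _ (fun k _ => hdnn k) hdsum) hdle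
  unfold genFunTrunc
  rw [Finset.sum_range_succ, Finset.sum_range_succ]
  set S := ∑ k ∈ Finset.range n, d k with hSdef
  have hsn : 0 ≤ s ^ n := pow_nonneg hs0 n
  have hkey : 0 ≤ (1 - S - d n) * (s ^ n - s ^ (n + 1)) := by
    apply mul_nonneg
    · rw [Finset.sum_range_succ, ← hSdef] at hS; linarith
    · have : s ^ (n + 1) ≤ s ^ n := by
        rw [pow_succ]; exact mul_le_of_le_one_right hsn hs1
      linarith
  nlinarith [hkey]

end Aux

/-- with `μ_n¹` the unique root of `H_n(x) + x = 1` in `(0,1)`, the sequence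
`(μ_n¹)` is nondecreasing, bounded above by `μ¹`, and converges to `μ¹`. -/
theorem trunc_first_moment_converges (d : ℕ → ℝ) (hd0 : d 0 = 0) (hdnn : ∀ k, 0 ≤ d k)
    (hdsum : Summable d) (hdle : ∑' k, d k ≤ 1) (hdpos : ∃ k, 0 < d k)
    (μ1 : ℝ) (hμ1 : μ1 ∈ Set.Ioo (0 : ℝ) 1) (hroot : genFun d μ1 + μ1 = 1)
    (μn : ℕ → ℝ)
    (hμn : ∀ n : ℕ, 1 ≤ n → μn n ∈ Set.Ioo (0 : ℝ) 1 ∧ genFunTrunc d n (μn n) + μn n = 1) :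
    (∀ m n : ℕ, 1 ≤ m → m ≤ n → μn m ≤ μn n) ∧
    (∀ n : ℕ, 1 ≤ n → μn n ≤ μ1) ∧
    Tendsto μn atTop (nhds μ1) := by
  obtain ⟨hμ10, hμ11⟩ := hμ1
  -- comparison lemma for roots
  have root_le : ∀ n t, 1 ≤ n → 0 ≤ t → t ≤ 1 → 1 ≤ genFunTrunc d n t + t → μn n ≤ t := by
    intro n t hn ht0 ht1 h
    obtain ⟨⟨h0, h1⟩, hr⟩ := hμn n hn
    by_contra hlt
    push_neg at hlt
    have := aux_trunc_mono hdnn hdsum hdle n ht0 hlt.le h1.le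
    linarith
  -- step monotonicity
  have step : ∀ n, 1 ≤ n → μn n ≤ μn (n + 1) := by
    intro n hn
    obtain ⟨⟨h0, h1⟩, hr⟩ := hμn (n + 1) (by omega)
    refine root_le n (μn (n + 1)) hn h0.le h1.le ?_
    have := aux_trunc_succ_le hdnn hdsum hdle n h0.le h1.le
    linarith
  have hmono : ∀ m n : ℕ, 1 ≤ m → m ≤ n → μn m ≤ μn n := by
    intro m n hm hmn
    induction n, hmn using Nat.le_induction with
    | base => exact le_rfl
    | succ k hk ih => exact ih.trans (step k (hm.trans hk))
  have hle : ∀ n : ℕ, 1 ≤ n → μn n ≤ μ1 := by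
    intro n hn
    refine root_le n μ1 hn hμ10.le hμ11.le ?_
    have := (aux_trunc_bounds hdnn hdsum hdle n hμ10.le hμ11.le).1
    linarith
  refine ⟨hmono, hle, ?_⟩
  -- the shifted sequence
  set f : ℕ → ℝ := fun n => μn (n + 1) with hfdef
  have hfmono : Monotone f := monotone_nat_of_le_succ fun n => step (n + 1) (by omega)
  have hfle : ∀ n, f n ≤ μ1 := fun n => hle (n + 1) (by omega)
  have hf0 : ∀ n, 0 < f n := fun n => ((hμn (n + 1) (by omega)).1).1
  have hf1 : ∀ n, f n < 1 := fun n => ((hμn (n + 1) (by omega)).1).2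
  have hbdd : BddAbove (Set.range f) := ⟨μ1, by rintro _ ⟨n, rfl⟩; exact hfle n⟩
  set L := ⨆ n, f n with hLdef
  have htL : Tendsto f atTop (𝓝 L) := tendsto_atTop_ciSup hfmono hbdd
  have hL_le : L ≤ μ1 := ciSup_le hfle
  have hL_ge : f 0 ≤ L := le_ciSup hbdd 0
  have hL0 : 0 < L := lt_of_lt_of_le (hf0 0) hL_ge
  have hL1 : L < 1 := lt_of_le_of_lt hL_le hμ11
  -- continuity of genFun via clamped series
  set c : ℝ → ℝ := fun x => max (-1) (min x 1) with hcdef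
  have hc : Continuous c := continuous_const.max (continuous_id.min continuous_const)
  have hcb : ∀ x, |c x| ≤ 1 := by
    intro x
    rw [abs_le]
    exact ⟨le_max_left _ _, max_le (by norm_num) (min_le_right _ _)⟩
  have hHc : Continuous (fun x => ∑' k, d k * (c x) ^ k) := by
    refine continuous_tsum (u := d) (fun k => continuous_const.mul (hc.pow k)) hdsum ?_
    intro k x
    rw [Real.norm_eq_abs, abs_mul, abs_of_nonneg (hdnn k), abs_pow]
    exact mul_le_of_le_one_right (hdnn k) (pow_le_one₀ (abs_nonneg _) (hcb x))
  have hceq : ∀ x : ℝ, 0 ≤ x → x ≤ 1 → (∑' k, d k * (c x) ^ k) = genFun d x := by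
    intro x h0 h1
    have : c x = x := by
      simp only [hcdef]
      rw [min_eq_left h1, max_eq_right (by linarith)]
    rw [this, genFun]
  have hcont : Tendsto (fun n => genFun d (f n)) atTop (𝓝 (genFun d L)) := by
    have h1 : Tendsto (fun n => ∑' k, d k * (c (f n)) ^ k) atTop
        (𝓝 (∑' k, d k * (c L) ^ k)) := (hHc.tendsto L).comp htL
    rw [hceq L hL0.le hL1.le] at h1
    refine h1.congr fun n => hceq (f n) (hf0 n).le (hf1 n).le
  have ha : Tendsto (fun n => genFun d (f n) + f n) atTop (𝓝 (genFun d L + L)) :=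
    hcont.add htL
  -- squeeze: the same sequence tends to 1
  have hsq : Tendsto (fun n => genFun d (f n) + f n) atTop (𝓝 1) := by
    have hg : Tendsto (fun n : ℕ => 1 - μ1 ^ (n + 1)) atTop (𝓝 1) := by
      have hpow : Tendsto (fun n : ℕ => μ1 ^ (n + 1)) atTop (𝓝 0) :=
        (tendsto_pow_atTop_nhds_zero_of_lt_one hμ10.le hμ11).comp (tendsto_add_atTop_nat 1)
      have := tendsto_const_nhds (x := (1 : ℝ)) (f := atTop (α := ℕ)) |>.sub hpow
      simpa using this
    refine tendsto_of_tendsto_of_tendsto_of_le_of_le hg tendsto_const_nhds ?_ ?_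
    · intro n
      obtain ⟨⟨h0, h1⟩, hr⟩ := hμn (n + 1) (by omega)
      have hb := (aux_trunc_bounds hdnn hdsum hdle (n + 1) h0.le h1.le).2
      have hpw : (f n) ^ (n + 1) ≤ μ1 ^ (n + 1) := pow_le_pow_left₀ (hf0 n).le (hfle n) _
      simp only [hfdef]
      simp only [hfdef] at hpw
      linarith
    · intro n
      obtain ⟨⟨h0, h1⟩, hr⟩ := hμn (n + 1) (by omega)
      have hb := (aux_trunc_bounds hdnn hdsum hdle (n + 1) h0.le h1.le).1
      simp only [hfdef]
      linarith
  have hkey : genFun d L + L = 1 := tendsto_nhds_unique ha hsq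
  have hLeq : L = μ1 := by
    rcases eq_or_lt_of_le hL_le with h | h
    · exact h
    · exfalso
      have := aux_genFun_mono hdnn hdsum hL0.le h.le hμ11.le
      linarith
  rw [← hLeq]
  exact (tendsto_add_atTop_iff_nat 1).1 htL
end

section
/- Let α ∈ (0,1), β = 1 − α, and define H(s) = αs/(1 − βs) for s ∈ [0,1] (the generating function of a Geometric(α) random variable) and f(s) = 1 − H(s). Then f maps [0,1] to [0,1] and f(f(s)) = s for every s ∈ [0,1]; consequently every pair (s, f(s)) is a two-cycle of f, and f has a unique fixed point in [0,1], namely s = 1/(1 + √α) (the unique root in (0,1) of H(s) + s = 1). -/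
/-!
Since `α + β = 1`, `1 - H s = (1 - s) / (1 - β s)` is a Möbius map whose matrix
`!![-1, 1; -β, 1]` squares to `(1 - β) • 1`, so it is an involution. Its fixed points solve
`β s² - 2 s + 1 = 0`, i.e. `((1 + √α) s - 1) ((1 - √α) s - 1) = 0`, and only the first root
lies in `[0, 1]`.
-/

open Set

noncomputable def geomFlip (β s : ℝ) : ℝ := (1 - s) / (1 - β * s)

lemma one_sub_div_one_sub_mul {α β s : ℝ} (hαβ : α + β = 1) (hs : 1 - β * s ≠ 0) :
    1 - α * s / (1 - β * s) = geomFlip β s := by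
  obtain rfl : α = 1 - β := by linarith
  rw [geomFlip, eq_div_iff hs, sub_mul, div_mul_cancel₀ _ hs]
  ring

lemma one_sub_mul_pos_of_mem_Icc {β s : ℝ} (hβ : β < 1) (hs : s ∈ Icc (0 : ℝ) 1) :
    0 < 1 - β * s := by
  obtain ⟨hs0, hs1⟩ := hs
  rcases le_or_gt β 0 with hβ0 | hβ0 <;> nlinarith

lemma geomFlip_mem_Icc {β s : ℝ} (hβ : β < 1) (hs : s ∈ Icc (0 : ℝ) 1) :
    geomFlip β s ∈ Icc (0 : ℝ) 1 := by
  have hd := one_sub_mul_pos_of_mem_Icc hβ hs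
  obtain ⟨hs0, hs1⟩ := hs
  refine ⟨div_nonneg (by linarith) hd.le, (div_le_one hd).2 ?_⟩
  nlinarith

lemma geomFlip_geomFlip {β s : ℝ} (hβ : β ≠ 1) (hs : 1 - β * s ≠ 0) :
    geomFlip β (geomFlip β s) = s := by
  have h1β : 1 - β ≠ 0 := sub_ne_zero.2 hβ.symm
  have hden : 1 - β * geomFlip β s = (1 - β) / (1 - β * s) := by
    rw [geomFlip, eq_div_iff hs, sub_mul, mul_assoc, div_mul_cancel₀ _ hs]
    ring
  rw [geomFlip, hden, div_div_eq_mul_div, div_eq_iff h1β, geomFlip, sub_mul,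
    div_mul_cancel₀ _ hs]
  ring

lemma geomFlip_eq_self_iff {β s : ℝ} (hβ : β < 1) (hs : s ∈ Icc (0 : ℝ) 1) :
    geomFlip β s = s ↔ s = 1 / (1 + √(1 - β)) := by
  have hd := one_sub_mul_pos_of_mem_Icc hβ hs
  obtain ⟨hs0, hs1⟩ := hs
  set t := √(1 - β)
  have ht0 : 0 < t := Real.sqrt_pos.2 (by linarith)
  have ht2 : t ^ 2 = 1 - β := Real.sq_sqrt (by linarith)
  have hfactor : geomFlip β s = s ↔ ((1 + t) * s - 1) * ((1 - t) * s - 1) = 0 := by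
    have hprod : ((1 + t) * s - 1) * ((1 - t) * s - 1) = (1 - s) - s * (1 - β * s) := by
      linear_combination (-s ^ 2) * ht2
    rw [geomFlip, div_eq_iff hd.ne', hprod, sub_eq_zero]
  have hsmall : (1 - t) * s - 1 ≠ 0 := by
    rcases hs0.eq_or_lt with rfl | hs0 <;> nlinarith
  rw [hfactor, mul_eq_zero, or_iff_left hsmall, eq_div_iff (by positivity), sub_eq_zero,
    mul_comm]

/-- for the Geometric(α) generating function `H(s) = αs/(1 - βs)` (with
`β = 1 - α`) and `f(s) = 1 - H(s)`, the map `f` sends `[0,1]` to `[0,1]`, satisfies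
`f (f s) = s` on `[0,1]` (so every pair `(s, f s)` is a two-cycle), and has a unique fixed
point in `[0,1]`, namely `s = 1/(1 + √α)` (the unique root in `(0,1)` of `H(s) + s = 1`). -/
theorem geometric_involution (α : ℝ) (hα : α ∈ Set.Ioo (0 : ℝ) 1)
    (β : ℝ) (hβ : β = 1 - α)
    (H : ℝ → ℝ) (hH : ∀ s, H s = α * s / (1 - β * s))
    (f : ℝ → ℝ) (hf : ∀ s, f s = 1 - H s) :
    (∀ s ∈ Set.Icc (0 : ℝ) 1, f s ∈ Set.Icc (0 : ℝ) 1) ∧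
    (∀ s ∈ Set.Icc (0 : ℝ) 1, f (f s) = s) ∧
    (∀ s ∈ Set.Icc (0 : ℝ) 1, f s = s ↔ s = 1 / (1 + Real.sqrt α)) := by
  have hβ1 : β < 1 := by linarith [hα.1]
  have hf_eq : ∀ s ∈ Icc (0 : ℝ) 1, f s = geomFlip β s := fun s hs => by
    rw [hf, hH, one_sub_div_one_sub_mul (by linarith) (one_sub_mul_pos_of_mem_Icc hβ1 hs).ne']
  refine ⟨fun s hs => ?_, fun s hs => ?_, fun s hs => ?_⟩
  · rw [hf_eq s hs]
    exact geomFlip_mem_Icc hβ1 hs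
  · rw [hf_eq s hs, hf_eq _ (geomFlip_mem_Icc hβ1 hs)]
    exact geomFlip_geomFlip hβ1.ne (one_sub_mul_pos_of_mem_Icc hβ1 hs).ne'
  · rw [hf_eq s hs, geomFlip_eq_self_iff hβ1 hs, hβ, sub_sub_cancel]
end
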